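/- For every n ≥ 0 and real a < b, ∫_a^b Q_n(u; a, b) du = 2^n · B_n(1/2) · (b−a)^{n+1}, where Q_n(u; a, b) = Σ_{k=1}^{n+1} M_{n+1,k} (u−a)^{n+1−k} (u−b)^{k−1}. -/

import Mathlib

/-!
Substituting `u = a + (b - a) t` turns `Q n a b` into `(b - a)^n P_n(t)`, where `P_0 = 1` and
`P_{n+1} = T P_n` for the operator `T f = 2 (t² - t) f' + (2t - 1) f`: the MacMahon recurrence is
exactly the action of `T` on the basis `t^i (t - 1)^j`.

The binomial transform `S_m = Σ_{k<m} C(m,k) 2^(m-k) P_k = ((T + 2)^m - T^m) 1` satisfies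
`(t - 1) S_m = P_m - 1`, and consequently `S_{m+1} - S_m` is the derivative of
`2t + 2 (t² - t) S_m`, whose values at `0` and `1` differ by `2`. Hence `∫₀¹ S_m = 2m`, i.e.
`J_k = 2^(-k) ∫₀¹ P_k` satisfies `Σ_{k ≤ n} C(n+1,k) J_k = (n+1) (1/2)^n`, the recurrence that
determines `B_k(1/2)`.
-/

open scoped BigOperators
open MeasureTheory

/-- MacMahon numbers `M n k`: `M n 1 = 1`, `M n k = 0` outside `1 ≤ k ≤ n`, and
`M n k = (2k−1) M (n−1) k + (2n−2k+1) M (n−1) (k−1)`. -/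
def macmahon : ℕ → ℕ → ℕ
  | 0, _ => 0
  | 1, 1 => 1
  | 1, _ => 0
  | n + 2, 0 => 0
  | n + 2, k + 1 =>
      (2 * k + 1) * macmahon (n + 1) (k + 1) +
        (2 * (n + 2) - 2 * (k + 1) + 1) * macmahon (n + 1) k

/-- Derivative polynomial `Q_n(u;a,b) = Σ_{k=1}^{n+1} M_{n+1,k} (u-a)^(n+1-k) (u-b)^(k-1)`. -/
noncomputable def Q (n : ℕ) (a b u : ℝ) : ℝ :=
  ∑ k ∈ Finset.Icc 1 (n + 1), (macmahon (n + 1) k : ℝ) * (u - a) ^ (n + 1 - k) * (u - b) ^ (k - 1)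

/-- The `n`-th Bernoulli polynomial evaluated at a real `x`
(convention `t e^{xt}/(e^t - 1) = Σ B_n(x) t^n / n!`). -/
noncomputable def bernPoly (n : ℕ) (x : ℝ) : ℝ :=
  ((Polynomial.bernoulli n).map (algebraMap ℚ ℝ)).eval x

open Polynomial Finset

theorem macmahon_zero_right (n : ℕ) : macmahon n 0 = 0 := by
  rcases n with _ | _ | n <;> rfl

theorem macmahon_eq_zero_of_lt {n k : ℕ} (h : n < k) : macmahon n k = 0 := by
  induction n generalizing k with
  | zero => rfl
  | succ n ih =>
    match n, k, h with
    | 0, k + 2, _ => rfl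
    | n + 1, k + 1, h =>
      rw [macmahon, ih (by omega), ih (by omega), mul_zero, mul_zero, add_zero]

theorem macmahon_succ_succ (n k : ℕ) :
    macmahon (n + 2) (k + 1) =
      (2 * k + 1) * macmahon (n + 1) (k + 1) + (2 * (n + 1 - k) + 1) * macmahon (n + 1) k := by
  rw [macmahon]
  congr 3
  omega

theorem X_sub_C_mul_derivative_X_sub_C_pow {R : Type*} [CommRing R] (r : R) (n : ℕ) :
    (X - C r) * derivative ((X - C r) ^ n) = (n : R[X]) * (X - C r) ^ n := by
  cases n with
  | zero => simp
  | succ n => rw [derivative_X_sub_C_pow, map_natCast, Nat.add_sub_cancel]; push_cast; ring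

section MacMahonPoly

variable (R : Type*) [CommRing R]

noncomputable def macmahonOp : Module.End R R[X] :=
  LinearMap.mulLeft R (2 * (X ^ 2 - X)) ∘ₗ derivative + LinearMap.mulLeft R (2 * X - 1)

/-- With `t = 1 / (1 + e^(2x))`, `(macmahonPoly R n).eval t = cosh x * (d/dx)^n (sech x)`. -/
noncomputable def macmahonPoly (n : ℕ) : R[X] := (macmahonOp R ^ n) 1

noncomputable def macmahonPolyBinomSum (m : ℕ) : R[X] :=
  ∑ k ∈ range m, (m.choose k * 2 ^ (m - k)) • macmahonPoly R k

variable {R}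

theorem macmahonOp_apply (f : R[X]) :
    macmahonOp R f = 2 * (X ^ 2 - X) * derivative f + (2 * X - 1) * f := rfl

@[simp]
theorem macmahonPoly_zero : macmahonPoly R 0 = 1 := rfl

theorem macmahonPoly_succ (n : ℕ) :
    macmahonPoly R (n + 1) = macmahonOp R (macmahonPoly R n) := by
  rw [macmahonPoly, pow_succ', Module.End.mul_apply, macmahonPoly]

theorem macmahonOp_X_pow_mul_X_sub_one_pow (i j : ℕ) :
    macmahonOp R (X ^ i * (X - 1) ^ j) =
      ((2 * i + 1 : ℕ) : R[X]) * X ^ i * (X - 1) ^ (j + 1) +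
        ((2 * j + 1 : ℕ) : R[X]) * X ^ (i + 1) * (X - 1) ^ j := by
  have hX := X_sub_C_mul_derivative_X_sub_C_pow (0 : R) i
  have hX1 := X_sub_C_mul_derivative_X_sub_C_pow (1 : R) j
  simp only [map_zero, sub_zero, map_one] at hX hX1
  rw [macmahonOp_apply, derivative_mul]
  push_cast
  linear_combination (2 * (X - 1) * (X - 1) ^ j) * hX + 2 * X * X ^ i * hX1

theorem macmahonPoly_eq_sum (n : ℕ) :
    macmahonPoly R n =
      ∑ p ∈ antidiagonal n, macmahon (n + 1) (p.2 + 1) • (X ^ p.1 * (X - 1) ^ p.2) := by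
  induction n with
  | zero => simp [macmahon]
  | succ n ih =>
    have hrec : ∀ p ∈ antidiagonal (n + 1),
        macmahon (n + 2) (p.2 + 1) • (X ^ p.1 * (X - 1 : R[X]) ^ p.2) =
          ((2 * p.2 + 1) * macmahon (n + 1) (p.2 + 1)) • (X ^ p.1 * (X - 1) ^ p.2) +
            ((2 * p.1 + 1) * macmahon (n + 1) p.2) • (X ^ p.1 * (X - 1) ^ p.2) := by
      intro p hp
      rw [HasAntidiagonal.mem_antidiagonal] at hp
      rw [macmahon_succ_succ, show n + 1 - p.2 = p.1 by omega, add_smul]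
    rw [sum_congr rfl hrec, sum_add_distrib, Nat.sum_antidiagonal_succ,
      Nat.sum_antidiagonal_succ', macmahon_eq_zero_of_lt (by omega : n + 1 < n + 2),
      macmahon_zero_right]
    simp only [mul_zero, zero_smul, zero_add]
    rw [← sum_add_distrib, macmahonPoly_succ, ih, map_sum]
    refine sum_congr rfl fun p _ => ?_
    rw [map_nsmul, macmahonOp_X_pow_mul_X_sub_one_pow]
    simp only [nsmul_eq_mul]
    push_cast
    ring

theorem macmahonOp_add_two_pow_apply_one (m : ℕ) :
    ((macmahonOp R + 2) ^ m) 1 = macmahonPolyBinomSum R m + macmahonPoly R m := by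
  rw [(Commute.ofNat_right (macmahonOp R) 2).add_pow, LinearMap.sum_apply, sum_range_succ,
    macmahonPolyBinomSum, Nat.choose_self, Nat.sub_self]
  congr 1
  · refine sum_congr rfl fun k _ => ?_
    rw [mul_assoc, Module.End.mul_apply, ← Nat.cast_ofNat, ← Nat.cast_pow, ← Nat.cast_mul,
      Module.End.natCast_apply, map_nsmul, mul_comm]
    rfl
  · simp [macmahonPoly]

theorem macmahonPolyBinomSum_succ (m : ℕ) :
    macmahonPolyBinomSum R (m + 1) =
      macmahonOp R (macmahonPolyBinomSum R m) + 2 * macmahonPolyBinomSum R m +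
        2 * macmahonPoly R m := by
  have h := macmahonOp_add_two_pow_apply_one (R := R) (m + 1)
  rw [pow_succ', Module.End.mul_apply, macmahonOp_add_two_pow_apply_one, macmahonPoly_succ,
    LinearMap.add_apply, Module.End.ofNat_apply, map_add, nsmul_eq_mul, Nat.cast_ofNat] at h
  linear_combination -h

theorem X_sub_one_mul_macmahonPolyBinomSum (m : ℕ) :
    (X - 1) * macmahonPolyBinomSum R m = macmahonPoly R m - 1 := by
  induction m with
  | zero => simp [macmahonPolyBinomSum]
  | succ m ih =>
    have ih' := congrArg derivative ih
    simp only [derivative_mul, derivative_sub, derivative_X, derivative_one, sub_zero, one_mul]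
      at ih'
    rw [macmahonPolyBinomSum_succ, macmahonPoly_succ, macmahonOp_apply, macmahonOp_apply]
    linear_combination (1 : R[X]) * ih + (2 * X ^ 2 - 2 * X) * ih'

theorem macmahonPolyBinomSum_succ_eq_add_derivative (m : ℕ) :
    macmahonPolyBinomSum R (m + 1) = macmahonPolyBinomSum R m +
      derivative (2 * X + 2 * (X ^ 2 - X) * macmahonPolyBinomSum R m) := by
  rw [macmahonPolyBinomSum_succ, macmahonOp_apply]
  simp only [derivative_add, derivative_mul, derivative_sub, derivative_X_pow, derivative_X,
    derivative_ofNat]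
  push_cast [map_ofNat]
  linear_combination (-2 : R[X]) * X_sub_one_mul_macmahonPolyBinomSum (R := R) m

theorem exists_derivative_eq_macmahonPolyBinomSum (m : ℕ) :
    ∃ F : R[X], derivative F = macmahonPolyBinomSum R m ∧ F.eval 1 - F.eval 0 = 2 * m := by
  induction m with
  | zero => exact ⟨0, by simp [macmahonPolyBinomSum], by simp⟩
  | succ m ih =>
    obtain ⟨F, hF, hF_eval⟩ := ih
    refine ⟨F + (2 * X + 2 * (X ^ 2 - X) * macmahonPolyBinomSum R m), ?_, ?_⟩
    · rw [derivative_add, hF, macmahonPolyBinomSum_succ_eq_add_derivative]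
    · simp only [eval_add, eval_mul, eval_sub, eval_pow, eval_X, eval_ofNat]
      push_cast
      linear_combination hF_eval

end MacMahonPoly
theorem integral_eval_derivative (F : ℝ[X]) (a b : ℝ) :
    ∫ t in a..b, (derivative F).eval t = F.eval b - F.eval a :=
  intervalIntegral.integral_eq_sub_of_hasDerivAt (fun x _ => F.hasDerivAt x)
    ((derivative F).continuous.intervalIntegrable a b)

theorem sum_choose_mul_integral_macmahonPoly (m : ℕ) :
    ∑ k ∈ range m, (m.choose k * 2 ^ (m - k) : ℝ) * ∫ t in (0 : ℝ)..1, (macmahonPoly ℝ k).eval t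
      = 2 * m := by
  obtain ⟨F, hF, hF_eval⟩ := exists_derivative_eq_macmahonPolyBinomSum (R := ℝ) m
  rw [← hF_eval, ← integral_eval_derivative, hF]
  simp only [macmahonPolyBinomSum, eval_finsetSum, nsmul_eq_mul]
  rw [intervalIntegral.integral_finsetSum fun k _ =>
    (Polynomial.continuous _).intervalIntegrable _ _]
  simp only [eval_mul, eval_natCast, eval_pow, eval_ofNat, intervalIntegral.integral_const_mul,
    Nat.cast_mul, Nat.cast_pow, Nat.cast_ofNat]

theorem sum_choose_mul_bernPoly (n : ℕ) (x : ℝ) :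
    ∑ k ∈ range (n + 1), ((n + 1).choose k : ℝ) * bernPoly k x = (n + 1) * x ^ n := by
  have h := congrArg (fun p => (p.map (algebraMap ℚ ℝ)).eval x) (Polynomial.sum_bernoulli n)
  simp only [Polynomial.map_sum, eval_finsetSum, Polynomial.smul_eq_C_mul, Polynomial.map_mul,
    map_natCast, Polynomial.map_natCast, eval_mul, eval_natCast, Polynomial.map_monomial,
    eval_monomial] at h
  push_cast at h
  exact h

theorem eq_bernPoly_of_sum_choose_mul (x : ℝ) (c : ℕ → ℝ)
    (hc : ∀ n, ∑ k ∈ range (n + 1), ((n + 1).choose k : ℝ) * c k = (n + 1) * x ^ n) (n : ℕ) :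
    c n = bernPoly n x := by
  induction n using Nat.strong_induction_on with
  | _ n ih =>
    have h := (hc n).trans (sum_choose_mul_bernPoly n x).symm
    rw [sum_range_succ, sum_range_succ, sum_congr rfl fun k hk => by rw [ih k (mem_range.mp hk)],
      add_left_cancel_iff, Nat.choose_succ_self_right] at h
    exact mul_left_cancel₀ (by positivity) h

theorem integral_macmahonPoly (n : ℕ) :
    ∫ t in (0 : ℝ)..1, (macmahonPoly ℝ n).eval t = 2 ^ n * bernPoly n (1 / 2) := by
  set I : ℕ → ℝ := fun k => ∫ t in (0 : ℝ)..1, (macmahonPoly ℝ k).eval t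
  suffices h : I n / 2 ^ n = bernPoly n (1 / 2) by
    rw [← h, mul_div_cancel₀ _ (by positivity)]
  refine eq_bernPoly_of_sum_choose_mul (1 / 2) (fun k => I k / 2 ^ k) (fun m => ?_) n
  calc ∑ k ∈ range (m + 1), ((m + 1).choose k : ℝ) * (I k / 2 ^ k)
      = (1 / 2) ^ (m + 1) *
          ∑ k ∈ range (m + 1), ((m + 1).choose k * 2 ^ (m + 1 - k) : ℝ) * I k := by
        rw [mul_sum]
        refine sum_congr rfl fun k hk => ?_
        rw [pow_sub₀ _ two_ne_zero (mem_range.mp hk).le, one_div, inv_pow]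
        field_simp
    _ = (m + 1) * (1 / 2) ^ m := by
        rw [sum_choose_mul_integral_macmahonPoly]
        push_cast
        ring

theorem integral_comp_sub_div_sub (f : ℝ → ℝ) (a b : ℝ) :
    ∫ u in a..b, f ((u - a) / (b - a)) = (b - a) * ∫ t in (0 : ℝ)..1, f t := by
  rcases eq_or_ne a b with rfl | hab
  · simp
  have hba : b - a ≠ 0 := sub_ne_zero.mpr hab.symm
  have h := intervalIntegral.integral_comp_sub_right (fun x => f (x / (b - a))) (a := a) (b := b) a
  rw [h, sub_self, intervalIntegral.integral_comp_div f hba, zero_div, div_self hba, smul_eq_mul]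

theorem Q_eq_sum_antidiagonal (n : ℕ) (a b u : ℝ) :
    Q n a b u =
      ∑ p ∈ antidiagonal n, (macmahon (n + 1) (p.2 + 1) : ℝ) * (u - a) ^ p.1 * (u - b) ^ p.2 := by
  have shift : Icc 1 (n + 1) = (Icc 0 n).map (addRightEmbedding 1) := by
    rw [map_add_right_Icc, zero_add]
  rw [Q, ← Nat.sum_antidiagonal_swap, Nat.sum_antidiagonal_eq_sum_range_succ_mk,
    Nat.range_succ_eq_Icc_zero, shift, sum_map]
  refine sum_congr rfl fun k _ => ?_
  simp only [addRightEmbedding_apply, Prod.swap_prod_mk, Nat.add_sub_add_right,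
    Nat.add_sub_cancel]

theorem Q_eq_macmahonPoly (n : ℕ) {a b : ℝ} (hab : a ≠ b) (u : ℝ) :
    Q n a b u = (b - a) ^ n * (macmahonPoly ℝ n).eval ((u - a) / (b - a)) := by
  have hba : b - a ≠ 0 := sub_ne_zero.mpr hab.symm
  rw [Q_eq_sum_antidiagonal, macmahonPoly_eq_sum, eval_finsetSum, mul_sum]
  refine sum_congr rfl fun p hp => ?_
  rw [← HasAntidiagonal.mem_antidiagonal.mp hp, pow_add]
  have h1 : (u - a) / (b - a) * (b - a) = u - a := div_mul_cancel₀ _ hba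
  have h2 : ((u - a) / (b - a) - 1) * (b - a) = u - b := by rw [sub_mul, h1]; ring
  simp only [nsmul_eq_mul, eval_mul, eval_natCast, eval_pow, eval_sub, eval_X, eval_one]
  conv_lhs => rw [← h1, ← h2, mul_pow, mul_pow]
  ring

theorem integral_Q_general (n : ℕ) (a b : ℝ) :
    ∫ u in a..b, Q n a b u = 2 ^ n * bernPoly n (1 / 2) * (b - a) ^ (n + 1) := by
  rcases eq_or_ne a b with rfl | hab
  · simp
  simp_rw [Q_eq_macmahonPoly n hab, intervalIntegral.integral_const_mul,
    integral_comp_sub_div_sub (fun t => (macmahonPoly ℝ n).eval t), integral_macmahonPoly]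
  ring

theorem integral_Q (n : ℕ) (a b : ℝ) (hab : a < b) :
    ∫ u in a..b, Q n a b u = 2 ^ n * bernPoly n (1 / 2) * (b - a) ^ (n + 1) :=
  integral_Q_general n a b
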